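/- arXiv:1410.6558 — 4 statements merged into one kernel-verified Lean document; each statement's English description precedes it below -/
import Mathlib

section
/- Let Ω ∈ ℝ^{n×d} be a frame with lower frame bound A > 0, let A_mat ∈ ℝ^{m×n}, k ≥ 1, and let 𝒜 : ℝ^m → ℝ^n be a map such that for every α ∈ ℝ^n and every e ∈ ℝ^m one has ‖α − 𝒜(A_mat α + e)‖₂² ≤ C₁‖e‖₂² + C₂(‖α − [α]_k‖₂² + (1/k)‖α − [α]_k‖₁²), for fixed constants C₁, C₂ ≥ 0. Then for every x ∈ ℝ^d and e ∈ ℝ^m, setting y = A_mat Ω x + e, ŵ = 𝒜(y), and x̂ = Ω† ŵ, one has ‖x − x̂‖₂² ≤ (C₁/A²)‖e‖₂² + (C₂/A²)(‖Ωx − [Ωx]_k‖₂² + (1/k)‖Ωx − [Ωx]_k‖₁²). -/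
open Matrix

/-- The Euclidean (ℓ₂) norm of a finitely-indexed real vector. -/
noncomputable def l2norm {ι : Type*} [Fintype ι] (v : ι → ℝ) : ℝ :=
  Real.sqrt (∑ i, v i ^ 2)

/-- The ℓ₁ norm of a finitely-indexed real vector. -/
def l1norm {ι : Type*} [Fintype ι] (v : ι → ℝ) : ℝ :=
  ∑ i, |v i|

/-- `αk` is a best `k`-term approximation of `α`: it keeps the `k`
largest-magnitude entries of `α` and sets the others to zero. -/
def IsBestKTermApprox {ι : Type*} [Fintype ι] [DecidableEq ι] (k : ℕ)
    (α αk : ι → ℝ) : Prop :=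
  ∃ S : Finset ι, S.card = min k (Fintype.card ι) ∧
    (∀ i, αk i = if i ∈ S then α i else 0) ∧
    ∀ i ∈ S, ∀ j ∉ S, |α j| ≤ |α i|

/-- `P` is the Moore–Penrose pseudo-inverse of `Ω` (the four Penrose conditions). -/
def IsMoorePenroseInv {ι κ : Type*} [Fintype ι] [Fintype κ]
    (Ω : Matrix ι κ ℝ) (P : Matrix κ ι ℝ) : Prop :=
  Ω * P * Ω = Ω ∧ P * Ω * P = P ∧ (Ω * P)ᵀ = Ω * P ∧ (P * Ω)ᵀ = P * Ω

/-!
The Penrose conditions make `Ω Ω†` a symmetric idempotent, i.e. the orthogonal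
projection onto the range of `Ω`, and `Ω (x - Ω† ŵ) = Ω Ω† (Ω x - ŵ)`. Hence
`A ‖x - x̂‖₂ ≤ ‖Ω (x - x̂)‖₂ ≤ ‖Ω x - ŵ‖₂`, and the recovery guarantee for `𝒜`, applied to
`α = Ω x`, bounds `‖Ω x - ŵ‖₂²`.
-/

section L2Norm

variable {ι : Type*} [Fintype ι]

lemma l2norm_nonneg (v : ι → ℝ) : 0 ≤ l2norm v :=
  Real.sqrt_nonneg _

lemma l2norm_sq (v : ι → ℝ) : l2norm v ^ 2 = v ⬝ᵥ v := by
  rw [l2norm, Real.sq_sqrt (Finset.sum_nonneg fun i _ => sq_nonneg _)]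
  simp only [dotProduct, sq]

lemma dotProduct_le_l2norm_mul_l2norm (u v : ι → ℝ) : u ⬝ᵥ v ≤ l2norm u * l2norm v :=
  Real.sum_mul_le_sqrt_mul_sqrt Finset.univ u v

lemma l2norm_mulVec_le_of_transpose_eq_of_mul_self_eq (Q : Matrix ι ι ℝ) (hsymm : Qᵀ = Q)
    (hidem : Q * Q = Q) (v : ι → ℝ) : l2norm (Q *ᵥ v) ≤ l2norm v := by
  have hsq : l2norm (Q *ᵥ v) ^ 2 ≤ l2norm (Q *ᵥ v) * l2norm v :=
    calc l2norm (Q *ᵥ v) ^ 2 = (Q *ᵥ v) ⬝ᵥ (Q *ᵥ v) := l2norm_sq _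
      _ = (Q *ᵥ v) ⬝ᵥ v := by
        rw [dotProduct_mulVec, ← mulVec_transpose, hsymm, mulVec_mulVec, hidem]
      _ ≤ l2norm (Q *ᵥ v) * l2norm v := dotProduct_le_l2norm_mul_l2norm _ _
  nlinarith [l2norm_nonneg (Q *ᵥ v), l2norm_nonneg v]

end L2Norm

namespace IsMoorePenroseInv

variable {ι κ : Type*} [Fintype ι] [Fintype κ] {Ω : Matrix ι κ ℝ} {P : Matrix κ ι ℝ}

lemma mul_mul_self_eq (hP : IsMoorePenroseInv Ω P) : Ω * P * (Ω * P) = Ω * P := by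
  rw [← Matrix.mul_assoc, hP.1]

lemma mulVec_sub_mulVec (hP : IsMoorePenroseInv Ω P) (x : κ → ℝ) (w : ι → ℝ) :
    Ω *ᵥ (x - P *ᵥ w) = (Ω * P) *ᵥ (Ω *ᵥ x - w) := by
  rw [mulVec_sub, mulVec_sub, mulVec_mulVec, mulVec_mulVec, hP.1]

lemma l2norm_mulVec_sub_mulVec_le (hP : IsMoorePenroseInv Ω P) (x : κ → ℝ)
    (w : ι → ℝ) : l2norm (Ω *ᵥ (x - P *ᵥ w)) ≤ l2norm (Ω *ᵥ x - w) := by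
  rw [hP.mulVec_sub_mulVec]
  exact l2norm_mulVec_le_of_transpose_eq_of_mul_self_eq _ hP.2.2.1 hP.mul_mul_self_eq _

end IsMoorePenroseInv

theorem stmt_0_general {n d m : ℕ} (k : ℕ)
    (Ω : Matrix (Fin n) (Fin d) ℝ) (A : ℝ) (hA : 0 < A)
    (hframe : ∀ x : Fin d → ℝ, A * l2norm x ≤ l2norm (Ω.mulVec x))
    (Amat : Matrix (Fin m) (Fin n) ℝ)
    (C₁ C₂ : ℝ)
    (Arec : (Fin m → ℝ) → (Fin n → ℝ))
    (hArec : ∀ (α : Fin n → ℝ) (e : Fin m → ℝ) (αk : Fin n → ℝ),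
      IsBestKTermApprox k α αk →
      l2norm (α - Arec (Amat.mulVec α + e)) ^ 2 ≤
        C₁ * l2norm e ^ 2 +
          C₂ * (l2norm (α - αk) ^ 2 + (1 / (k : ℝ)) * l1norm (α - αk) ^ 2))
    (P : Matrix (Fin d) (Fin n) ℝ) (hP : IsMoorePenroseInv Ω P)
    (x : Fin d → ℝ) (e : Fin m → ℝ)
    (y : Fin m → ℝ) (hy : y = Amat.mulVec (Ω.mulVec x) + e)
    (wHat : Fin n → ℝ) (hwHat : wHat = Arec y)
    (xHat : Fin d → ℝ) (hxHat : xHat = P.mulVec wHat)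
    (wk : Fin n → ℝ) (hwk : IsBestKTermApprox k (Ω.mulVec x) wk) :
    l2norm (x - xHat) ^ 2 ≤
      (C₁ / A ^ 2) * l2norm e ^ 2 +
        (C₂ / A ^ 2) * (l2norm (Ω.mulVec x - wk) ^ 2 +
          (1 / (k : ℝ)) * l1norm (Ω.mulVec x - wk) ^ 2) := by
  have hbound : A * l2norm (x - xHat) ≤ l2norm (Ω *ᵥ x - wHat) := by
    rw [hxHat]
    exact (hframe _).trans (hP.l2norm_mulVec_sub_mulVec_le x wHat)
  have hrec : l2norm (Ω *ᵥ x - wHat) ^ 2 ≤ C₁ * l2norm e ^ 2 +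
      C₂ * (l2norm (Ω *ᵥ x - wk) ^ 2 + (1 / (k : ℝ)) * l1norm (Ω *ᵥ x - wk) ^ 2) := by
    rw [hwHat, hy]
    exact hArec _ e wk hwk
  have hsq : (A * l2norm (x - xHat)) ^ 2 ≤ l2norm (Ω *ᵥ x - wHat) ^ 2 :=
    pow_le_pow_left₀ (mul_nonneg hA.le (l2norm_nonneg _)) hbound 2
  rw [div_mul_eq_mul_div, div_mul_eq_mul_div, ← add_div, le_div_iff₀ (by positivity)]
  linarith [mul_pow A (l2norm (x - xHat)) 2]

/-- Theorem: signal recovery from samples of frames in the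
transform domain, adversarial noise case. -/
theorem stmt_0 {n d m : ℕ} (k : ℕ) (hk : 1 ≤ k)
    (Ω : Matrix (Fin n) (Fin d) ℝ) (A : ℝ) (hA : 0 < A)
    (hframe : ∀ x : Fin d → ℝ, A * l2norm x ≤ l2norm (Ω.mulVec x))
    (Amat : Matrix (Fin m) (Fin n) ℝ)
    (C₁ C₂ : ℝ) (hC₁ : 0 ≤ C₁) (hC₂ : 0 ≤ C₂)
    (Arec : (Fin m → ℝ) → (Fin n → ℝ))
    (hArec : ∀ (α : Fin n → ℝ) (e : Fin m → ℝ) (αk : Fin n → ℝ),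
      IsBestKTermApprox k α αk →
      l2norm (α - Arec (Amat.mulVec α + e)) ^ 2 ≤
        C₁ * l2norm e ^ 2 +
          C₂ * (l2norm (α - αk) ^ 2 + (1 / (k : ℝ)) * l1norm (α - αk) ^ 2))
    (P : Matrix (Fin d) (Fin n) ℝ) (hP : IsMoorePenroseInv Ω P)
    (x : Fin d → ℝ) (e : Fin m → ℝ)
    (y : Fin m → ℝ) (hy : y = Amat.mulVec (Ω.mulVec x) + e)
    (wHat : Fin n → ℝ) (hwHat : wHat = Arec y)
    (xHat : Fin d → ℝ) (hxHat : xHat = P.mulVec wHat)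
    (wk : Fin n → ℝ) (hwk : IsBestKTermApprox k (Ω.mulVec x) wk) :
    l2norm (x - xHat) ^ 2 ≤
      (C₁ / A ^ 2) * l2norm e ^ 2 +
        (C₂ / A ^ 2) * (l2norm (Ω.mulVec x - wk) ^ 2 +
          (1 / (k : ℝ)) * l1norm (Ω.mulVec x - wk) ^ 2) :=
  stmt_0_general k Ω A hA hframe Amat C₁ C₂ Arec hArec P hP x e y hy wHat hwHat xHat hxHat wk hwk
end

section
/- Let Ω ∈ ℝ^{n×d} be a general analysis operator, A_mat ∈ ℝ^{m₁×n}, B ∈ ℝ^{m₂×d}, p ≥ 1, k ≥ 1, and β, γ, ζ, ξ ≥ 0. Suppose B is such that for every z ∈ ℝ^d and every ε ≥ 0, ‖Bz‖₂ ≤ ε implies ‖z‖₂ ≤ β‖Ωz‖_p + γε. Suppose 𝒜 : ℝ^{m₁} → ℝ^n satisfies, for every α ∈ ℝ^n and every e₁ ∈ ℝ^{m₁}, ‖α − 𝒜(A_mat α + e₁)‖_p ≤ ζ‖e₁‖₂ + ξ‖α − [α]_k‖₁. Let x ∈ ℝ^d, e₁ ∈ ℝ^{m₁}, e₂ ∈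 ℝ^{m₂}, y₁ = A_mat Ω x + e₁, y₂ = Bx + e₂, ŵ = 𝒜(y₁), and let x̂ be a minimizer of ‖Ω x̃ − ŵ‖_p over all x̃ ∈ ℝ^d satisfying ‖B x̃ − y₂‖₂ ≤ ‖e₂‖₂. Then ‖x̂ − x‖₂ ≤ 2β(ζ‖e₁‖₂ + ξ‖Ωx − [Ωx]_k‖₁) + 2γ‖e₂‖₂. -/
/-!
Both `x` and `x̂` satisfy the measurement constraint, so `‖B (x̂ - x)‖₂ ≤ 2 ‖e₂‖₂`; and since
`x̂` fits `ŵ` at least as well as `x` does, `‖Ω (x̂ - x)‖_p ≤ 2 ‖Ω x - ŵ‖_p`, which the recovery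
guarantee of `𝒜` bounds by `2 (ζ ‖e₁‖₂ + ξ ‖Ω x - [Ω x]_k‖₁)`. The stability hypothesis on `B`,
applied to `z = x̂ - x` with `ε = 2 ‖e₂‖₂`, turns these two bounds into the claim.
-/

open Matrix

/-- The ℓ_p norm of a finitely-indexed real vector. -/
noncomputable def lpnorm {ι : Type*} [Fintype ι] (p : ℝ) (v : ι → ℝ) : ℝ :=
  (∑ i, |v i| ^ p) ^ (1 / p)

section Seminorm

variable {E F G : Type*} [AddGroup E] [AddGroup F] [AddGroup G]

theorem AddGroupSeminorm.map_sub_le_map_sub_add_map_sub (f : AddGroupSeminorm G) (a b c : G) :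
    f (a - b) ≤ f (a - c) + f (b - c) :=
  map_sub_rev f b c ▸ le_map_sub_add_map_sub f a c b

theorem sub_le_of_feasible_of_map_sub_le (Ω : E →+ F) (B : E →+ G) (nE : E → ℝ)
    (nF : AddGroupSeminorm F) (nG : AddGroupSeminorm G) {β γ : ℝ} (hβ : 0 ≤ β)
    (hB : ∀ z ε, 0 ≤ ε → nG (B z) ≤ ε → nE z ≤ β * nF (Ω z) + γ * ε)
    {x xHat : E} {w : F} {y : G} {η : ℝ} (hx : nG (B x - y) ≤ η) (hxHat : nG (B xHat - y) ≤ η)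
    (hmin : nF (Ω xHat - w) ≤ nF (Ω x - w)) :
    nE (xHat - x) ≤ 2 * β * nF (Ω x - w) + 2 * γ * η := by
  have hΩ : nF (Ω (xHat - x)) ≤ 2 * nF (Ω x - w) := by
    rw [map_sub]
    linarith [nF.map_sub_le_map_sub_add_map_sub (Ω xHat) (Ω x) w]
  have hB' : nG (B (xHat - x)) ≤ 2 * η := by
    rw [map_sub]
    linarith [nG.map_sub_le_map_sub_add_map_sub (B xHat) (B x) y]
  have hη : 0 ≤ η := (apply_nonneg nG _).trans hx
  calc nE (xHat - x) ≤ β * nF (Ω (xHat - x)) + γ * (2 * η) := hB _ _ (by positivity) hB'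
    _ ≤ β * (2 * nF (Ω x - w)) + γ * (2 * η) := by gcongr
    _ = 2 * β * nF (Ω x - w) + 2 * γ * η := by ring

end Seminorm

section FiniteDimensional

variable {ι : Type*} [Fintype ι]

theorem l2norm_eq_norm (v : ι → ℝ) : l2norm v = ‖WithLp.toLp 2 v‖ := by
  simp [l2norm, EuclideanSpace.norm_eq]

noncomputable def l2Seminorm : AddGroupSeminorm (ι → ℝ) where
  toFun := l2norm
  map_zero' := by simp [l2norm]
  add_le' a b := by simpa only [l2norm_eq_norm, WithLp.toLp_add] using norm_add_le _ _
  neg' a := by simp [l2norm]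

noncomputable def lpSeminorm {p : ℝ} (hp : 1 ≤ p) : AddGroupSeminorm (ι → ℝ) where
  toFun := lpnorm p
  map_zero' := by simp [lpnorm, Real.zero_rpow, (by positivity : p ≠ 0)]
  add_le' a b := by simpa [lpnorm] using Real.Lp_add_le Finset.univ a b hp
  neg' a := by simp [lpnorm]

end FiniteDimensional

theorem stmt_2_general {n d m₁ m₂ : ℕ} (k : ℕ) (p : ℝ) (hp : 1 ≤ p)
    (Ω : Matrix (Fin n) (Fin d) ℝ)
    (Amat : Matrix (Fin m₁) (Fin n) ℝ) (B : Matrix (Fin m₂) (Fin d) ℝ)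
    (β γ ζ ξ : ℝ) (hβ : 0 ≤ β)
    (hB : ∀ (z : Fin d → ℝ) (ε : ℝ), 0 ≤ ε → l2norm (B.mulVec z) ≤ ε →
      l2norm z ≤ β * lpnorm p (Ω.mulVec z) + γ * ε)
    (Arec : (Fin m₁ → ℝ) → (Fin n → ℝ))
    (hArec : ∀ (α : Fin n → ℝ) (e₁ : Fin m₁ → ℝ) (αk : Fin n → ℝ),
      IsBestKTermApprox k α αk →
      lpnorm p (α - Arec (Amat.mulVec α + e₁)) ≤
        ζ * l2norm e₁ + ξ * l1norm (α - αk))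
    (x : Fin d → ℝ) (e₁ : Fin m₁ → ℝ) (e₂ : Fin m₂ → ℝ)
    (y₁ : Fin m₁ → ℝ) (hy₁ : y₁ = Amat.mulVec (Ω.mulVec x) + e₁)
    (y₂ : Fin m₂ → ℝ) (hy₂ : y₂ = B.mulVec x + e₂)
    (wHat : Fin n → ℝ) (hwHat : wHat = Arec y₁)
    (xHat : Fin d → ℝ)
    (hfeas : l2norm (B.mulVec xHat - y₂) ≤ l2norm e₂)
    (hmin : ∀ xTil : Fin d → ℝ, l2norm (B.mulVec xTil - y₂) ≤ l2norm e₂ →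
      lpnorm p (Ω.mulVec xHat - wHat) ≤ lpnorm p (Ω.mulVec xTil - wHat))
    (wk : Fin n → ℝ) (hwk : IsBestKTermApprox k (Ω.mulVec x) wk) :
    l2norm (xHat - x) ≤
      2 * β * (ζ * l2norm e₁ + ξ * l1norm (Ω.mulVec x - wk)) +
        2 * γ * l2norm e₂ := by
  have hx : l2norm (B.mulVec x - y₂) ≤ l2norm e₂ := by
    rw [hy₂, sub_add_cancel_left]
    exact (map_neg_eq_map l2Seminorm e₂).le
  have hrec : lpnorm p (Ω.mulVec x - wHat) ≤ ζ * l2norm e₁ + ξ * l1norm (Ω.mulVec x - wk) := by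
    rw [hwHat, hy₁]
    exact hArec _ e₁ wk hwk
  calc l2norm (xHat - x)
      ≤ 2 * β * lpnorm p (Ω.mulVec x - wHat) + 2 * γ * l2norm e₂ :=
        sub_le_of_feasible_of_map_sub_le Ω.mulVecLin.toAddMonoidHom B.mulVecLin.toAddMonoidHom
          l2norm (lpSeminorm hp) l2Seminorm hβ hB hx hfeas (hmin x hx)
    _ ≤ 2 * β * (ζ * l2norm e₁ + ξ * l1norm (Ω.mulVec x - wk)) + 2 * γ * l2norm e₂ := by
        gcongr

/-- stable signal recovery from samples of a general
analysis operator in the transform domain. -/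
theorem stmt_2 {n d m₁ m₂ : ℕ} (k : ℕ) (hk : 1 ≤ k) (p : ℝ) (hp : 1 ≤ p)
    (Ω : Matrix (Fin n) (Fin d) ℝ)
    (Amat : Matrix (Fin m₁) (Fin n) ℝ) (B : Matrix (Fin m₂) (Fin d) ℝ)
    (β γ ζ ξ : ℝ) (hβ : 0 ≤ β) (hγ : 0 ≤ γ) (hζ : 0 ≤ ζ) (hξ : 0 ≤ ξ)
    (hB : ∀ (z : Fin d → ℝ) (ε : ℝ), 0 ≤ ε → l2norm (B.mulVec z) ≤ ε →
      l2norm z ≤ β * lpnorm p (Ω.mulVec z) + γ * ε)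
    (Arec : (Fin m₁ → ℝ) → (Fin n → ℝ))
    (hArec : ∀ (α : Fin n → ℝ) (e₁ : Fin m₁ → ℝ) (αk : Fin n → ℝ),
      IsBestKTermApprox k α αk →
      lpnorm p (α - Arec (Amat.mulVec α + e₁)) ≤
        ζ * l2norm e₁ + ξ * l1norm (α - αk))
    (x : Fin d → ℝ) (e₁ : Fin m₁ → ℝ) (e₂ : Fin m₂ → ℝ)
    (y₁ : Fin m₁ → ℝ) (hy₁ : y₁ = Amat.mulVec (Ω.mulVec x) + e₁)
    (y₂ : Fin m₂ → ℝ) (hy₂ : y₂ = B.mulVec x + e₂)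
    (wHat : Fin n → ℝ) (hwHat : wHat = Arec y₁)
    (xHat : Fin d → ℝ)
    (hfeas : l2norm (B.mulVec xHat - y₂) ≤ l2norm e₂)
    (hmin : ∀ xTil : Fin d → ℝ, l2norm (B.mulVec xTil - y₂) ≤ l2norm e₂ →
      lpnorm p (Ω.mulVec xHat - wHat) ≤ lpnorm p (Ω.mulVec xTil - wHat))
    (wk : Fin n → ℝ) (hwk : IsBestKTermApprox k (Ω.mulVec x) wk) :
    l2norm (xHat - x) ≤
      2 * β * (ζ * l2norm e₁ + ξ * l1norm (Ω.mulVec x - wk)) +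
        2 * γ * l2norm e₂ :=
  stmt_2_general k p hp Ω Amat B β γ ζ ξ hβ hB Arec hArec x e₁ e₂ y₁ hy₁ y₂ hy₂ wHat hwHat xHat
    hfeas hmin wk hwk
end

section
/- Let L ≥ 1, N ≥ 2, d = N^L, and let Ω_{LD-DIF} be the L-dimensional finite difference operator on (column-stacked) L-dimensional signals of side length N. Let A_mat, B be matrices of appropriate dimensions, k ≥ 1, and C > 0. Suppose B satisfies: for every z ∈ ℝ^d and every ε ≥ 0, ‖Bz‖₂ ≤ ε implies ‖z‖₂ ≤ (C/√k)·log(d)·‖Ω_{LD-DIF} z‖₁ + ε. Suppose 𝒜 satisfies, for every α and every e₁, ‖α − 𝒜(A_mat α + e₁)‖₁ ≤ C₅√k‖e₁‖₂ + C₆‖α − [α]_k‖₁, for fixed constants C₅, C₆ ≥ 0. Let x ∈ ℝ^d, noise vectors e₁, e₂, y₁ = A_mat Ω_{LD-DIF} x + e₁, y₂ = Bx + e₂, ŵ = 𝒜(y₁), and let x̂ be a minimizer of ‖Ω_{LD-DIF} x̃ − ŵ‖₁ over all x̃ satisfying ‖B x̃ − y₂‖₂ ≤ ‖e₂‖₂.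 Then ‖x̂ − x‖₂ ≤ log(d)·(C₉‖e₁‖₂ + (C₁₀/√k)‖Ω_{LD-DIF} x − [Ω_{LD-DIF} x]_k‖₁) with C₉ = 2C·C₅ and C₁₀ = 2C·C₆, plus the additional term 2‖e₂‖₂. -/
/-!
The minimality of `x̂` and the feasibility of `x` give `‖Ω(x̂ - x)‖₁ ≤ 2‖Ωx - ŵ‖₁`, while
feasibility of both gives `‖B(x̂ - x)‖₂ ≤ 2‖e₂‖₂`. The hypothesis on `B`, applied to
`z = x̂ - x` with `ε = 2‖e₂‖₂`, turns these into an `ℓ₂` bound on `x̂ - x`, and the recovery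
guarantee for `𝒜` bounds `‖Ωx - ŵ‖₁`.
-/

open Matrix

/-- Index set for the rows of the `L`-dimensional finite difference operator on
signals indexed by `(Fin N)^L`: a direction `ℓ` together with a base point `v`
whose `ℓ`-th coordinate can be incremented. -/
abbrev DifLDIndex (L N : ℕ) : Type :=
  Σ ℓ : Fin L, {v : Fin L → Fin N // (v ℓ).1 + 1 < N}

/-- The `L`-dimensional finite difference operator `Ω_{LD-DIF}`: for each
coordinate direction `ℓ` it collects all first differences of `x` in
direction `ℓ`. -/
def difLD {L N : ℕ} (x : (Fin L → Fin N) → ℝ) : DifLDIndex L N → ℝ :=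
  fun q =>
    x (Function.update q.2.1 q.1 ⟨(q.2.1 q.1).1 + 1, q.2.2⟩) - x q.2.1

section Norms

variable {ι : Type*} [Fintype ι]

lemma l2norm_neg (v : ι → ℝ) : l2norm (-v) = l2norm v := by
  simp [l2norm]

lemma l2norm_sub_eq_dist (u v : ι → ℝ) :
    l2norm (u - v) = dist (WithLp.toLp 2 u : EuclideanSpace ℝ ι) (WithLp.toLp 2 v) := by
  simp [l2norm, EuclideanSpace.dist_eq, Real.dist_eq, sq_abs]

lemma l2norm_sub_le (u v w : ι → ℝ) :
    l2norm (u - v) ≤ l2norm (u - w) + l2norm (v - w) := by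
  simp only [l2norm_sub_eq_dist]
  exact dist_triangle_right _ _ _

lemma l1norm_sub_le (u v w : ι → ℝ) :
    l1norm (u - v) ≤ l1norm (u - w) + l1norm (v - w) := by
  rw [l1norm, l1norm, l1norm, ← Finset.sum_add_distrib]
  refine Finset.sum_le_sum fun i _ => ?_
  simpa [abs_sub_comm (v i)] using abs_sub_le (u i) (w i) (v i)

end Norms

def difLDAddHom (L N : ℕ) : ((Fin L → Fin N) → ℝ) →+ (DifLDIndex L N → ℝ) :=
  AddMonoidHom.mk' difLD fun u v => by
    funext q
    simp only [difLD, Pi.add_apply]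
    ring

lemma l2norm_sub_le_of_minimizer {ι κ m : Type*} [Fintype ι] [Fintype κ] [Fintype m]
    (B : Matrix m ι ℝ) (Ω : (ι → ℝ) →+ (κ → ℝ)) {β : ℝ} (hβ : 0 ≤ β)
    (hB : ∀ (z : ι → ℝ) (ε : ℝ), 0 ≤ ε → l2norm (B *ᵥ z) ≤ ε →
      l2norm z ≤ β * l1norm (Ω z) + ε)
    {x xHat : ι → ℝ} {y e : m → ℝ} {w : κ → ℝ} (hy : y = B *ᵥ x + e)
    (hfeas : l2norm (B *ᵥ xHat - y) ≤ l2norm e)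
    (hmin : ∀ xTil : ι → ℝ, l2norm (B *ᵥ xTil - y) ≤ l2norm e →
      l1norm (Ω xHat - w) ≤ l1norm (Ω xTil - w)) :
    l2norm (xHat - x) ≤ 2 * β * l1norm (Ω x - w) + 2 * l2norm e := by
  have hx_feas : l2norm (B *ᵥ x - y) = l2norm e := by
    rw [hy, sub_add_cancel_left, l2norm_neg]
  have htube : l2norm (B *ᵥ (xHat - x)) ≤ 2 * l2norm e := by
    rw [mulVec_sub]
    linarith [l2norm_sub_le (B *ᵥ xHat) (B *ᵥ x) y]
  have hdiff : l1norm (Ω (xHat - x)) ≤ 2 * l1norm (Ω x - w) := by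
    rw [map_sub]
    linarith [l1norm_sub_le (Ω xHat) (Ω x) w, hmin x hx_feas.le]
  calc l2norm (xHat - x)
      ≤ β * l1norm (Ω (xHat - x)) + 2 * l2norm e :=
        hB _ _ (mul_nonneg zero_le_two (l2norm_nonneg e)) htube
    _ ≤ β * (2 * l1norm (Ω x - w)) + 2 * l2norm e := by gcongr
    _ = 2 * β * l1norm (Ω x - w) + 2 * l2norm e := by ring

theorem stmt_4_general (L N : ℕ) {m₁ m₂ : ℕ}
    (k : ℕ) (hk : 1 ≤ k)
    (Amat : Matrix (Fin m₁) (DifLDIndex L N) ℝ)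
    (B : Matrix (Fin m₂) (Fin L → Fin N) ℝ)
    (C : ℝ) (hC : 0 < C)
    (C₅ C₆ : ℝ)
    (hB : ∀ (z : (Fin L → Fin N) → ℝ) (ε : ℝ), 0 ≤ ε → l2norm (B.mulVec z) ≤ ε →
      l2norm z ≤ (C / Real.sqrt k) * Real.log ((N : ℝ) ^ L) * l1norm (difLD z) + ε)
    (Arec : (Fin m₁ → ℝ) → (DifLDIndex L N → ℝ))
    (hArec : ∀ (α : DifLDIndex L N → ℝ) (e₁ : Fin m₁ → ℝ) (αk : DifLDIndex L N → ℝ),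
      IsBestKTermApprox k α αk →
      l1norm (α - Arec (Amat.mulVec α + e₁)) ≤
        C₅ * Real.sqrt k * l2norm e₁ + C₆ * l1norm (α - αk))
    (x : (Fin L → Fin N) → ℝ) (e₁ : Fin m₁ → ℝ) (e₂ : Fin m₂ → ℝ)
    (y₁ : Fin m₁ → ℝ) (hy₁ : y₁ = Amat.mulVec (difLD x) + e₁)
    (y₂ : Fin m₂ → ℝ) (hy₂ : y₂ = B.mulVec x + e₂)
    (wHat : DifLDIndex L N → ℝ) (hwHat : wHat = Arec y₁)
    (xHat : (Fin L → Fin N) → ℝ)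
    (hfeas : l2norm (B.mulVec xHat - y₂) ≤ l2norm e₂)
    (hmin : ∀ xTil : (Fin L → Fin N) → ℝ,
      l2norm (B.mulVec xTil - y₂) ≤ l2norm e₂ →
      l1norm (difLD xHat - wHat) ≤ l1norm (difLD xTil - wHat))
    (wk : DifLDIndex L N → ℝ) (hwk : IsBestKTermApprox k (difLD x) wk)
    (C₉ C₁₀ : ℝ) (hC₉ : C₉ = 2 * C * C₅) (hC₁₀ : C₁₀ = 2 * C * C₆) :
    l2norm (xHat - x) ≤
      Real.log ((N : ℝ) ^ L) *
        (C₉ * l2norm e₁ + (C₁₀ / Real.sqrt k) * l1norm (difLD x - wk)) +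
        2 * l2norm e₂ := by
  have hlog : 0 ≤ Real.log ((N : ℝ) ^ L) := by
    exact_mod_cast Real.log_natCast_nonneg (N ^ L)
  have hsqrt : Real.sqrt k ≠ 0 := Real.sqrt_ne_zero'.2 (by exact_mod_cast hk)
  have hrec : l1norm (difLD x - wHat) ≤
      C₅ * Real.sqrt k * l2norm e₁ + C₆ * l1norm (difLD x - wk) := by
    simpa only [← hy₁, ← hwHat] using hArec (difLD x) e₁ wk hwk
  have hβ : 0 ≤ C / Real.sqrt k * Real.log ((N : ℝ) ^ L) := by positivity
  calc l2norm (xHat - x)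
      ≤ 2 * (C / Real.sqrt k * Real.log ((N : ℝ) ^ L)) * l1norm (difLD x - wHat) +
          2 * l2norm e₂ :=
        l2norm_sub_le_of_minimizer B (difLDAddHom L N) hβ hB hy₂ hfeas hmin
    _ ≤ 2 * (C / Real.sqrt k * Real.log ((N : ℝ) ^ L)) *
          (C₅ * Real.sqrt k * l2norm e₁ + C₆ * l1norm (difLD x - wk)) + 2 * l2norm e₂ := by
        gcongr
    _ = Real.log ((N : ℝ) ^ L) *
          (C₉ * l2norm e₁ + (C₁₀ / Real.sqrt k) * l1norm (difLD x - wk)) +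
          2 * l2norm e₂ := by
        rw [hC₉, hC₁₀]
        field_simp

/-- stable signal recovery from samples of `L`D-DIF in the
transform domain. -/
theorem stmt_4 (L N : ℕ) (hL : 1 ≤ L) (hN : 2 ≤ N) {m₁ m₂ : ℕ}
    (k : ℕ) (hk : 1 ≤ k)
    (Amat : Matrix (Fin m₁) (DifLDIndex L N) ℝ)
    (B : Matrix (Fin m₂) (Fin L → Fin N) ℝ)
    (C : ℝ) (hC : 0 < C)
    (C₅ C₆ : ℝ) (hC₅ : 0 ≤ C₅) (hC₆ : 0 ≤ C₆)
    (hB : ∀ (z : (Fin L → Fin N) → ℝ) (ε : ℝ), 0 ≤ ε → l2norm (B.mulVec z) ≤ ε →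
      l2norm z ≤ (C / Real.sqrt k) * Real.log ((N : ℝ) ^ L) * l1norm (difLD z) + ε)
    (Arec : (Fin m₁ → ℝ) → (DifLDIndex L N → ℝ))
    (hArec : ∀ (α : DifLDIndex L N → ℝ) (e₁ : Fin m₁ → ℝ) (αk : DifLDIndex L N → ℝ),
      IsBestKTermApprox k α αk →
      l1norm (α - Arec (Amat.mulVec α + e₁)) ≤
        C₅ * Real.sqrt k * l2norm e₁ + C₆ * l1norm (α - αk))
    (x : (Fin L → Fin N) → ℝ) (e₁ : Fin m₁ → ℝ) (e₂ : Fin m₂ → ℝ)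
    (y₁ : Fin m₁ → ℝ) (hy₁ : y₁ = Amat.mulVec (difLD x) + e₁)
    (y₂ : Fin m₂ → ℝ) (hy₂ : y₂ = B.mulVec x + e₂)
    (wHat : DifLDIndex L N → ℝ) (hwHat : wHat = Arec y₁)
    (xHat : (Fin L → Fin N) → ℝ)
    (hfeas : l2norm (B.mulVec xHat - y₂) ≤ l2norm e₂)
    (hmin : ∀ xTil : (Fin L → Fin N) → ℝ,
      l2norm (B.mulVec xTil - y₂) ≤ l2norm e₂ →
      l1norm (difLD xHat - wHat) ≤ l1norm (difLD xTil - wHat))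
    (wk : DifLDIndex L N → ℝ) (hwk : IsBestKTermApprox k (difLD x) wk)
    (C₉ C₁₀ : ℝ) (hC₉ : C₉ = 2 * C * C₅) (hC₁₀ : C₁₀ = 2 * C * C₆) :
    l2norm (xHat - x) ≤
      Real.log ((N : ℝ) ^ L) *
        (C₉ * l2norm e₁ + (C₁₀ / Real.sqrt k) * l1norm (difLD x - wk)) +
        2 * l2norm e₂ :=
  stmt_4_general L N k hk Amat B C hC C₅ C₆ hB Arec hArec x e₁ e₂ y₁ hy₁ y₂ hy₂ wHat hwHat xHat
    hfeas hmin wk hwk C₉ C₁₀ hC₉ hC₁₀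
end

section
/- Let Ω ∈ ℝ^{n×d}, B ∈ ℝ^{m₂×d}, p ≥ 1, and β, γ ≥ 0. Suppose that for every z ∈ ℝ^d and every ε ≥ 0, ‖Bz‖₂ ≤ ε implies ‖z‖₂ ≤ β‖Ωz‖_p + γε. Let x ∈ ℝ^d, e₂ ∈ ℝ^{m₂}, y₂ = Bx + e₂, let ŵ ∈ ℝ^n be arbitrary, and let x̂ be a minimizer of ‖Ω x̃ − ŵ‖_p over all x̃ ∈ ℝ^d satisfying ‖B x̃ − y₂‖₂ ≤ ‖e₂‖₂. Then ‖B(x̂ − x)‖₂ ≤ 2‖e₂‖₂, ‖Ω(x̂ − x)‖_p ≤ 2‖Ωx − ŵ‖_p, and consequently ‖x̂ − x‖₂ ≤ 2β‖Ωx − ŵ‖_p + 2γ‖e₂‖₂. -/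
open Matrix

/-!
Both bounds are the triangle inequality through a reference point: `x` is feasible with
`‖Bx - y₂‖₂ = ‖e₂‖₂`, so `x̂` and `x` lie within `‖e₂‖₂` of `y₂` under `B`, and by minimality
`Ωx̂` is at least as close to `ŵ` as `Ωx`. The resulting bound `‖B(x̂ - x)‖₂ ≤ 2‖e₂‖₂` is
then fed into the robust null space hypothesis with `ε = 2‖e₂‖₂`.
-/

section Norms

variable {ι : Type*} [Fintype ι]

lemma lpnorm_sub_comm (p : ℝ) (u v : ι → ℝ) : lpnorm p (u - v) = lpnorm p (v - u) := by
  simp only [lpnorm, Pi.sub_apply, abs_sub_comm]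

lemma lpnorm_add_le {p : ℝ} (hp : 1 ≤ p) (u v : ι → ℝ) :
    lpnorm p (u + v) ≤ lpnorm p u + lpnorm p v := by
  simpa [lpnorm] using Real.Lp_add_le Finset.univ u v hp

lemma lpnorm_sub_le_two_mul_of_le {p : ℝ} (hp : 1 ≤ p) {u v w : ι → ℝ}
    (h : lpnorm p (u - w) ≤ lpnorm p (v - w)) :
    lpnorm p (u - v) ≤ 2 * lpnorm p (v - w) := by
  calc lpnorm p (u - v) = lpnorm p ((u - w) + (w - v)) := by rw [sub_add_sub_cancel]
    _ ≤ lpnorm p (u - w) + lpnorm p (w - v) := lpnorm_add_le hp _ _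
    _ ≤ 2 * lpnorm p (v - w) := by rw [lpnorm_sub_comm p w v]; linarith

lemma l2norm_eq_lpnorm_two (v : ι → ℝ) : l2norm v = lpnorm 2 v := by
  simp only [l2norm, lpnorm, Real.sqrt_eq_rpow, Real.rpow_two, sq_abs]

lemma l2norm_sub_le_two_mul_of_le {u v w : ι → ℝ} (h : l2norm (u - w) ≤ l2norm (v - w)) :
    l2norm (u - v) ≤ 2 * l2norm (v - w) := by
  simp only [l2norm_eq_lpnorm_two] at h ⊢
  exact lpnorm_sub_le_two_mul_of_le one_le_two h

end Norms

theorem stmt_8_general {n d m₂ : ℕ} (p : ℝ) (hp : 1 ≤ p)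
    (Ω : Matrix (Fin n) (Fin d) ℝ) (B : Matrix (Fin m₂) (Fin d) ℝ)
    (β γ : ℝ) (hβ : 0 ≤ β)
    (hB : ∀ (z : Fin d → ℝ) (ε : ℝ), 0 ≤ ε → l2norm (B.mulVec z) ≤ ε →
      l2norm z ≤ β * lpnorm p (Ω.mulVec z) + γ * ε)
    (x : Fin d → ℝ) (e₂ : Fin m₂ → ℝ)
    (y₂ : Fin m₂ → ℝ) (hy₂ : y₂ = B.mulVec x + e₂)
    (wHat : Fin n → ℝ)
    (xHat : Fin d → ℝ)
    (hfeas : l2norm (B.mulVec xHat - y₂) ≤ l2norm e₂)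
    (hmin : ∀ xTil : Fin d → ℝ, l2norm (B.mulVec xTil - y₂) ≤ l2norm e₂ →
      lpnorm p (Ω.mulVec xHat - wHat) ≤ lpnorm p (Ω.mulVec xTil - wHat)) :
    l2norm (B.mulVec (xHat - x)) ≤ 2 * l2norm e₂ ∧
    lpnorm p (Ω.mulVec (xHat - x)) ≤ 2 * lpnorm p (Ω.mulVec x - wHat) ∧
    l2norm (xHat - x) ≤ 2 * β * lpnorm p (Ω.mulVec x - wHat) + 2 * γ * l2norm e₂ := by
  have hx : l2norm (B *ᵥ x - y₂) = l2norm e₂ := by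
    rw [hy₂, sub_add_cancel_left, l2norm_neg]
  have hBdiff : l2norm (B *ᵥ (xHat - x)) ≤ 2 * l2norm e₂ := by
    rw [mulVec_sub, ← hx]
    exact l2norm_sub_le_two_mul_of_le (hfeas.trans hx.ge)
  have hΩdiff : lpnorm p (Ω *ᵥ (xHat - x)) ≤ 2 * lpnorm p (Ω *ᵥ x - wHat) := by
    rw [mulVec_sub]
    exact lpnorm_sub_le_two_mul_of_le hp (hmin x hx.le)
  refine ⟨hBdiff, hΩdiff, ?_⟩
  calc l2norm (xHat - x)
      ≤ β * lpnorm p (Ω *ᵥ (xHat - x)) + γ * (2 * l2norm e₂) :=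
        hB _ _ (mul_nonneg zero_le_two (l2norm_nonneg e₂)) hBdiff
    _ ≤ β * (2 * lpnorm p (Ω *ᵥ x - wHat)) + γ * (2 * l2norm e₂) := by gcongr
    _ = 2 * β * lpnorm p (Ω *ᵥ x - wHat) + 2 * γ * l2norm e₂ := by ring

/-- constrained-minimization step: from transform-domain
proximity to signal-domain proximity. -/
theorem stmt_8 {n d m₂ : ℕ} (p : ℝ) (hp : 1 ≤ p)
    (Ω : Matrix (Fin n) (Fin d) ℝ) (B : Matrix (Fin m₂) (Fin d) ℝ)
    (β γ : ℝ) (hβ : 0 ≤ β) (hγ : 0 ≤ γ)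
    (hB : ∀ (z : Fin d → ℝ) (ε : ℝ), 0 ≤ ε → l2norm (B.mulVec z) ≤ ε →
      l2norm z ≤ β * lpnorm p (Ω.mulVec z) + γ * ε)
    (x : Fin d → ℝ) (e₂ : Fin m₂ → ℝ)
    (y₂ : Fin m₂ → ℝ) (hy₂ : y₂ = B.mulVec x + e₂)
    (wHat : Fin n → ℝ)
    (xHat : Fin d → ℝ)
    (hfeas : l2norm (B.mulVec xHat - y₂) ≤ l2norm e₂)
    (hmin : ∀ xTil : Fin d → ℝ, l2norm (B.mulVec xTil - y₂) ≤ l2norm e₂ →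
      lpnorm p (Ω.mulVec xHat - wHat) ≤ lpnorm p (Ω.mulVec xTil - wHat)) :
    l2norm (B.mulVec (xHat - x)) ≤ 2 * l2norm e₂ ∧
    lpnorm p (Ω.mulVec (xHat - x)) ≤ 2 * lpnorm p (Ω.mulVec x - wHat) ∧
    l2norm (xHat - x) ≤ 2 * β * lpnorm p (Ω.mulVec x - wHat) + 2 * γ * l2norm e₂ :=
  stmt_8_general p hp Ω B β γ hβ hB x e₂ y₂ hy₂ wHat xHat hfeas hmin
end
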